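/- Let C be a binary linear code of length n whose extended code C_ex is transitive invariant. For even w, L_w(C) = ((n+1-w)/(n+1)) · L_w(C_ex) − N_w(C), where N_w(C) is the number of only-odd-decomposable codewords of weight w in C; in particular L_w(C) ≤ ((n+1-w)/(n+1)) · L_w(C_ex). -/

import Mathlib

open Finset

/-- Support of a binary vector: the set of nonzero coordinates. -/
def supp {n : ℕ} (v : Fin n → ZMod 2) : Finset (Fin n) :=
  Finset.univ.filter fun i => v i ≠ 0

/-- Hamming weight. -/
def wt {n : ℕ} (v : Fin n → ZMod 2) : ℕ := (supp v).card

/-- A nonzero codeword of `D` is a zero neighbor (minimal codeword) if no nonzero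
codeword of `D` has support strictly contained in its support. -/
def IsZeroNeighbor {n : ℕ} (D : Set (Fin n → ZMod 2)) (v : Fin n → ZMod 2) : Prop :=
  v ∈ D ∧ v ≠ 0 ∧ ∀ v' ∈ D, v' ≠ 0 → ¬ supp v' ⊂ supp v

/-- `v` is decomposable in `D` if it is the sum of two nonzero codewords of `D`
with disjoint supports. -/
def Decomposable {n : ℕ} (D : Set (Fin n → ZMod 2)) (v : Fin n → ZMod 2) : Prop :=
  ∃ v1 v2, v1 ∈ D ∧ v2 ∈ D ∧ v1 ≠ 0 ∧ v2 ≠ 0 ∧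
    Disjoint (supp v1) (supp v2) ∧ v = v1 + v2

/-- Extension of a vector by its overall parity bit. -/
def extVec {n : ℕ} (v : Fin n → ZMod 2) : Fin (n + 1) → ZMod 2 :=
  Fin.snoc v (∑ i, v i)

/-- The extended code. -/
def extCode {n : ℕ} (C : Submodule (ZMod 2) (Fin n → ZMod 2)) :
    Set (Fin (n + 1) → ZMod 2) :=
  extVec '' (C : Set (Fin n → ZMod 2))

/-- An even-weight codeword is only-odd-decomposable if it is decomposable and in every
decomposition into nonzero disjoint-support codewords both parts have odd weight. -/
def OnlyOddDecomposable {n : ℕ} (C : Submodule (ZMod 2) (Fin n → ZMod 2))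
    (v : Fin n → ZMod 2) : Prop :=
  Even (wt v) ∧ Decomposable (C : Set (Fin n → ZMod 2)) v ∧
    ∀ v1 v2, v1 ∈ C → v2 ∈ C → v1 ≠ 0 → v2 ≠ 0 →
      Disjoint (supp v1) (supp v2) → v = v1 + v2 → Odd (wt v1) ∧ Odd (wt v2)

/-- `L_w(D)`: the number of zero neighbors of weight `w` in `D`. -/
noncomputable def Lw {n : ℕ} (D : Set (Fin n → ZMod 2)) (w : ℕ) : ℕ :=
  {v : Fin n → ZMod 2 | IsZeroNeighbor D v ∧ wt v = w}.ncard

/-- `N_w(C)`: the number of only-odd-decomposable codewords of weight `w` in `C`. -/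
noncomputable def Nw {n : ℕ} (C : Submodule (ZMod 2) (Fin n → ZMod 2)) (w : ℕ) : ℕ :=
  {v : Fin n → ZMod 2 | v ∈ C ∧ OnlyOddDecomposable C v ∧ wt v = w}.ncard

/-- Action of a coordinate permutation on a vector. -/
def permVec {n : ℕ} (π : Equiv.Perm (Fin n)) (v : Fin n → ZMod 2) : Fin n → ZMod 2 :=
  v ∘ π.symm

/-- `π` is an automorphism of the code `D`. -/
def IsAut {n : ℕ} (D : Set (Fin n → ZMod 2)) (π : Equiv.Perm (Fin n)) : Prop :=
  permVec π '' D = D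

/-- The even weight subcode of `C`, as a set. -/
def evenSub {n : ℕ} (C : Submodule (ZMod 2) (Fin n → ZMod 2)) :
    Set (Fin n → ZMod 2) :=
  {v : Fin n → ZMod 2 | v ∈ C ∧ Even (wt v)}


/-!
Double count the pairs `(u, i)` with `u` a weight-`w` zero neighbor of `C_ex` and `u i ≠ 0`:
by transitivity every coordinate is hit equally often, so a fraction `(n + 1 - w) / (n + 1)` of
these zero neighbors vanish at the parity position. As `w` is even, those are exactly the
extensions of the weight-`w` zero neighbors of the even weight subcode of `C`. Such a word is a
zero neighbor of `C` unless some nonzero codeword `u` of `C` lies strictly below it; then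
`u` must be odd, and the word is only-odd-decomposable.
-/

section BinaryVectors

variable {n : ℕ}

lemma mem_supp {v : Fin n → ZMod 2} {i : Fin n} : i ∈ supp v ↔ v i ≠ 0 := by
  simp [supp]

lemma supp_nonempty_iff {v : Fin n → ZMod 2} : (supp v).Nonempty ↔ v ≠ 0 := by
  simp [supp, Finset.filter_nonempty_iff, funext_iff]

lemma supp_add_of_disjoint {v₁ v₂ : Fin n → ZMod 2} (h : Disjoint (supp v₁) (supp v₂)) :
    supp (v₁ + v₂) = supp v₁ ∪ supp v₂ := by
  have key : ∀ a b : ZMod 2, ¬(a ≠ 0 ∧ b ≠ 0) → (a + b ≠ 0 ↔ a ≠ 0 ∨ b ≠ 0) := by decide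
  ext i
  simp only [mem_supp, mem_union, Pi.add_apply]
  exact key _ _ fun ⟨h₁, h₂⟩ => disjoint_left.1 h (mem_supp.2 h₁) (mem_supp.2 h₂)

lemma supp_sub_of_subset {u v : Fin n → ZMod 2} (h : supp u ⊆ supp v) :
    supp (v - u) = supp v \ supp u := by
  have key : ∀ a b : ZMod 2, (a ≠ 0 → b ≠ 0) → (b - a ≠ 0 ↔ b ≠ 0 ∧ ¬a ≠ 0) := by decide
  ext i
  simp only [mem_supp, mem_sdiff, Pi.sub_apply]
  exact key _ _ fun hu => mem_supp.1 (h (mem_supp.2 hu))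

lemma supp_ssubset_supp_add {v₁ v₂ : Fin n → ZMod 2} (h : Disjoint (supp v₁) (supp v₂))
    (h₂ : v₂ ≠ 0) : supp v₁ ⊂ supp (v₁ + v₂) := by
  rw [supp_add_of_disjoint h]
  obtain ⟨i, hi⟩ := supp_nonempty_iff.2 h₂
  exact Finset.ssubset_iff_subset_ne.2 ⟨subset_union_left, fun heq =>
    disjoint_left.1 h.symm hi (heq ▸ mem_union_right _ hi)⟩

lemma sum_eq_wt (v : Fin n → ZMod 2) : ∑ i, v i = (wt v : ZMod 2) := by
  have hone : ∀ i ∈ supp v, v i = 1 := fun i hi => by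
    have key : ∀ a : ZMod 2, a ≠ 0 → a = 1 := by decide
    exact key _ (mem_supp.1 hi)
  rw [← sum_filter_ne_zero, ← supp, sum_congr rfl hone, sum_const, nsmul_one, wt]

lemma sum_card_filter_ne_zero (S : Finset (Fin n → ZMod 2)) :
    ∑ i, #(S.filter fun u => u i ≠ 0) = ∑ u ∈ S, wt u :=
  (sum_card_bipartiteAbove_eq_sum_card_bipartiteBelow (s := S) (t := univ)
    fun u i => u i ≠ 0).symm

end BinaryVectors

section Permutations

variable {n : ℕ}

lemma permVec_apply (π : Equiv.Perm (Fin n)) (v : Fin n → ZMod 2) (i : Fin n) :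
    permVec π v (π i) = v i := by
  simp [permVec]

lemma permVec_injective (π : Equiv.Perm (Fin n)) : Function.Injective (permVec π) :=
  fun _ _ h => funext fun i => by simpa only [permVec_apply] using congrFun h (π i)

lemma permVec_eq_zero_iff {π : Equiv.Perm (Fin n)} {v : Fin n → ZMod 2} :
    permVec π v = 0 ↔ v = 0 :=
  ⟨fun h => permVec_injective π (h.trans rfl), by rintro rfl; rfl⟩

lemma supp_permVec (π : Equiv.Perm (Fin n)) (v : Fin n → ZMod 2) :
    supp (permVec π v) = (supp v).map π.toEmbedding := by
  ext j
  obtain ⟨i, rfl⟩ := π.surjective j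
  simp [mem_supp, permVec_apply]

lemma wt_permVec (π : Equiv.Perm (Fin n)) (v : Fin n → ZMod 2) : wt (permVec π v) = wt v := by
  rw [wt, supp_permVec, card_map, wt]

lemma IsZeroNeighbor.permVec_of_isAut {D : Set (Fin n → ZMod 2)} {π : Equiv.Perm (Fin n)}
    (hπ : IsAut D π) {v : Fin n → ZMod 2} (hv : IsZeroNeighbor D v) :
    IsZeroNeighbor D (permVec π v) := by
  obtain ⟨hvD, hv0, hmin⟩ := hv
  refine ⟨hπ ▸ Set.mem_image_of_mem _ hvD, mt permVec_eq_zero_iff.1 hv0, ?_⟩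
  rintro _ hu' hu0 hss
  obtain ⟨u, huD, rfl⟩ : _ ∈ permVec π '' D := hπ.symm ▸ hu'
  rw [supp_permVec, supp_permVec, map_ssubset_map] at hss
  exact hmin u huD (mt permVec_eq_zero_iff.2 hu0) hss

/-- Transitivity makes the number of words of `S` supported at `j` independent of `j`; double
counting the pairs `(u, i)` with `u i ≠ 0` then gives the identity. -/
lemma card_mul_card_filter_ne_zero {m w : ℕ} (S : Finset (Fin m → ZMod 2))
    (hwt : ∀ u ∈ S, wt u = w)
    (htrans : ∀ i j, ∃ π : Equiv.Perm (Fin m), π i = j ∧ ∀ u ∈ S, permVec π u ∈ S)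
    (j : Fin m) :
    m * #(S.filter fun u => u j ≠ 0) = w * #S := by
  have hle : ∀ i j, #(S.filter fun u => u i ≠ 0) ≤ #(S.filter fun u => u j ≠ 0) := by
    intro i j
    obtain ⟨π, rfl, hS⟩ := htrans i j
    refine card_le_card_of_injOn (permVec π) (fun u hu => ?_) (permVec_injective π).injOn
    simp only [coe_filter, Set.mem_ofPred_eq] at hu ⊢
    exact ⟨hS u hu.1, by rw [permVec_apply]; exact hu.2⟩
  calc m * #(S.filter fun u => u j ≠ 0)
      = ∑ i, #(S.filter fun u => u i ≠ 0) := by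
        simp [fun i => le_antisymm (hle i j) (hle j i)]
    _ = w * #S := by
        rw [sum_card_filter_ne_zero, sum_congr rfl hwt, sum_const, smul_eq_mul, mul_comm]

end Permutations

section Decompositions

variable {n : ℕ}

lemma not_isZeroNeighbor_of_decomposable {D : Set (Fin n → ZMod 2)} {v : Fin n → ZMod 2}
    (h : Decomposable D v) : ¬IsZeroNeighbor D v := by
  rintro ⟨-, -, hmin⟩
  obtain ⟨v₁, v₂, h₁, -, h₁0, h₂0, hd, rfl⟩ := h
  exact hmin v₁ h₁ h₁0 (supp_ssubset_supp_add hd h₂0)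

lemma disjoint_supp_sub_of_ssubset {u v : Fin n → ZMod 2} (h : supp u ⊂ supp v) :
    Disjoint (supp u) (supp (v - u)) ∧ v - u ≠ 0 := by
  rw [← supp_nonempty_iff, supp_sub_of_subset h.1, sdiff_nonempty]
  exact ⟨disjoint_sdiff, h.2⟩

/-- A smaller codeword `u` splits `v` as `u + (v - u)`, and minimality among even words makes
every such part odd. -/
theorem isZeroNeighbor_evenSub_iff (C : Submodule (ZMod 2) (Fin n → ZMod 2))
    {v : Fin n → ZMod 2} (he : Even (wt v)) :
    IsZeroNeighbor (evenSub C) v ↔ IsZeroNeighbor C v ∨ OnlyOddDecomposable C v := by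
  constructor
  · rintro ⟨⟨hvC, -⟩, hv0, hmin⟩
    by_contra! ⟨hzn, hood⟩
    obtain ⟨u, huC, hu0, hss⟩ : ∃ u ∈ C, u ≠ 0 ∧ supp u ⊂ supp v := by
      by_contra! hsmall
      exact hzn ⟨hvC, hv0, hsmall⟩
    obtain ⟨hd, hsub0⟩ := disjoint_supp_sub_of_ssubset hss
    refine hood ⟨he, ⟨u, v - u, huC, C.sub_mem hvC huC, hu0, hsub0, hd, (add_sub_cancel u v).symm⟩,
      fun v₁ v₂ h₁ h₂ h₁0 h₂0 hd₁₂ hsum => ?_⟩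
    have hss₁ : supp v₁ ⊂ supp v := hsum ▸ supp_ssubset_supp_add hd₁₂ h₂0
    have hss₂ : supp v₂ ⊂ supp v := hsum ▸ add_comm v₁ v₂ ▸ supp_ssubset_supp_add hd₁₂.symm h₁0
    exact ⟨Nat.not_even_iff_odd.1 fun he₁ => hmin v₁ ⟨h₁, he₁⟩ h₁0 hss₁,
      Nat.not_even_iff_odd.1 fun he₂ => hmin v₂ ⟨h₂, he₂⟩ h₂0 hss₂⟩
  · rintro (⟨hvC, hv0, hmin⟩ | hood)
    · exact ⟨⟨hvC, he⟩, hv0, fun u hu => hmin u hu.1⟩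
    obtain ⟨-, ⟨v₁, v₂, h₁, h₂, h₁0, h₂0, hd₁₂, hsum⟩, hodd⟩ := hood
    have hvC : v ∈ C := hsum ▸ C.add_mem h₁ h₂
    refine ⟨⟨hvC, he⟩, fun hv0 => ?_, fun u ⟨huC, hue⟩ hu0 hss => ?_⟩
    · have := hsum ▸ supp_ssubset_supp_add hd₁₂ h₂0
      simp [hv0, supp] at this
    · obtain ⟨hd, hsub0⟩ := disjoint_supp_sub_of_ssubset hss
      exact Nat.not_odd_iff_even.2 hue
        (hodd u (v - u) huC (C.sub_mem hvC huC) hu0 hsub0 hd (add_sub_cancel u v).symm).1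

lemma OnlyOddDecomposable.mem {C : Submodule (ZMod 2) (Fin n → ZMod 2)} {v : Fin n → ZMod 2}
    (h : OnlyOddDecomposable C v) : v ∈ C := by
  obtain ⟨-, ⟨v₁, v₂, h₁, h₂, -, -, -, rfl⟩, -⟩ := h
  exact C.add_mem h₁ h₂

theorem Lw_evenSub (C : Submodule (ZMod 2) (Fin n → ZMod 2)) {w : ℕ} (hw : Even w) :
    Lw (evenSub C) w = Lw (C : Set (Fin n → ZMod 2)) w + Nw C w := by
  rw [Lw, Lw, Nw, ← Set.ncard_union_eq]
  · congr 1
    ext v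
    simp only [Set.mem_ofPred_eq, Set.mem_union]
    constructor
    · rintro ⟨hv, rfl⟩
      rcases (isZeroNeighbor_evenSub_iff C hw).1 hv with hzn | hood
      exacts [.inl ⟨hzn, rfl⟩, .inr ⟨hood.mem, hood, rfl⟩]
    · rintro (⟨hzn, rfl⟩ | ⟨-, hood, rfl⟩)
      exacts [⟨(isZeroNeighbor_evenSub_iff C hw).2 (.inl hzn), rfl⟩,
        ⟨(isZeroNeighbor_evenSub_iff C hw).2 (.inr hood), rfl⟩]
  · exact Set.disjoint_left.2 fun v ⟨hzn, _⟩ ⟨_, hood, _⟩ =>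
      not_isZeroNeighbor_of_decomposable hood.2.1 hzn

end Decompositions

section Extension

variable {n : ℕ}

lemma extVec_castSucc (v : Fin n → ZMod 2) (i : Fin n) : extVec v i.castSucc = v i :=
  Fin.snoc_castSucc _ _ _

lemma extVec_last_eq_zero_iff {v : Fin n → ZMod 2} :
    extVec v (Fin.last n) = 0 ↔ Even (wt v) := by
  rw [extVec, Fin.snoc_last, sum_eq_wt, ZMod.natCast_eq_zero_iff_even]

lemma extVec_injective : Function.Injective (extVec (n := n)) :=
  fun _ _ h => funext fun i => by simpa only [extVec_castSucc] using congrFun h i.castSucc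

lemma extVec_eq_zero_iff {v : Fin n → ZMod 2} : extVec v = 0 ↔ v = 0 := by
  have hzero : extVec (0 : Fin n → ZMod 2) = 0 := by
    ext j
    induction j using Fin.lastCases <;> simp [extVec]
  exact ⟨fun h => extVec_injective (h.trans hzero.symm), fun h => h ▸ hzero⟩

lemma supp_extVec_of_even {v : Fin n → ZMod 2} (he : Even (wt v)) :
    supp (extVec v) = (supp v).map Fin.castSuccEmb := by
  ext j
  induction j using Fin.lastCases with
  | last => simp [mem_supp, extVec_last_eq_zero_iff.2 he, Fin.castSucc_ne_last]
  | cast i => simp [mem_supp, extVec_castSucc]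

lemma wt_extVec_of_even {v : Fin n → ZMod 2} (he : Even (wt v)) : wt (extVec v) = wt v := by
  rw [wt, supp_extVec_of_even he, card_map, wt]

/-- A codeword of `C_ex` inside the support of `extVec v`, for `v` even, vanishes at the parity
position, so it is the extension of an even codeword of `C`. -/
theorem isZeroNeighbor_extCode_extVec_iff (C : Submodule (ZMod 2) (Fin n → ZMod 2))
    {v : Fin n → ZMod 2} (he : Even (wt v)) :
    IsZeroNeighbor (extCode C) (extVec v) ↔ IsZeroNeighbor (evenSub C) v := by
  constructor
  · rintro ⟨⟨v₀, hv₀C, hv₀⟩, hv0, hmin⟩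
    refine ⟨⟨extVec_injective hv₀ ▸ hv₀C, he⟩, mt extVec_eq_zero_iff.2 hv0, ?_⟩
    rintro u ⟨huC, hue⟩ hu0 hss
    refine hmin (extVec u) ⟨u, huC, rfl⟩ (mt extVec_eq_zero_iff.1 hu0) ?_
    rwa [supp_extVec_of_even he, supp_extVec_of_even hue, map_ssubset_map]
  · rintro ⟨⟨hvC, -⟩, hv0, hmin⟩
    refine ⟨⟨v, hvC, rfl⟩, mt extVec_eq_zero_iff.1 hv0, ?_⟩
    rintro _ ⟨u, huC, rfl⟩ hu0 hss
    have hue : Even (wt u) := by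
      rw [← extVec_last_eq_zero_iff]
      by_contra hlast
      have := hss.1 (mem_supp.2 hlast)
      simp [supp_extVec_of_even he, Fin.castSucc_ne_last] at this
    rw [supp_extVec_of_even he, supp_extVec_of_even hue, map_ssubset_map] at hss
    exact hmin u ⟨huC, hue⟩ (mt extVec_eq_zero_iff.2 hu0) hss

end Extension

section Counting

variable {n : ℕ}

open Classical in
lemma Lw_eq_card (D : Set (Fin n → ZMod 2)) (w : ℕ) :
    Lw D w = #(univ.filter fun v => IsZeroNeighbor D v ∧ wt v = w) := by
  simp [Lw, ← Set.ncard_coe_finset]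

open Classical in
theorem card_filter_isZeroNeighbor_extCode_last_eq_zero (C : Submodule (ZMod 2) (Fin n → ZMod 2))
    (w : ℕ) :
    #((univ.filter fun u => IsZeroNeighbor (extCode C) u ∧ wt u = w).filter
        fun u => u (Fin.last n) = 0) = Lw (evenSub C) w := by
  rw [Lw_eq_card, ← card_image_of_injective _ (extVec_injective (n := n))]
  refine congrArg card (Finset.ext fun u => ?_)
  simp only [mem_filter, mem_univ, true_and, mem_image]
  constructor
  · rintro ⟨⟨hu, rfl⟩, hlast⟩
    obtain ⟨v, -, rfl⟩ := hu.1
    have he := extVec_last_eq_zero_iff.1 hlast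
    exact ⟨v, ⟨(isZeroNeighbor_extCode_extVec_iff C he).1 hu, (wt_extVec_of_even he).symm⟩, rfl⟩
  · rintro ⟨v, ⟨hv, rfl⟩, rfl⟩
    have he := hv.1.2
    exact ⟨⟨(isZeroNeighbor_extCode_extVec_iff C he).2 hv, wt_extVec_of_even he⟩,
      extVec_last_eq_zero_iff.2 he⟩

end Counting

theorem lwd_even_from_extended {n : ℕ}
    (C : Submodule (ZMod 2) (Fin n → ZMod 2))
    (htrans : ∀ i j : Fin (n + 1), ∃ π : Equiv.Perm (Fin (n + 1)),
      IsAut (extCode C) π ∧ π i = j)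
    (w : ℕ) (hw : Even w) :
    (Lw (C : Set (Fin n → ZMod 2)) w : ℚ) =
        (((n : ℚ) + 1 - w) / (n + 1)) * Lw (extCode C) w - Nw C w ∧
      (Lw (C : Set (Fin n → ZMod 2)) w : ℚ) ≤
        (((n : ℚ) + 1 - w) / (n + 1)) * Lw (extCode C) w := by
  classical
  set S := univ.filter fun u => IsZeroNeighbor (extCode C) u ∧ wt u = w
  have hpar : (n + 1) * #(S.filter fun u => u (Fin.last n) ≠ 0) = w * #S := by
    refine card_mul_card_filter_ne_zero S (fun u hu => (mem_filter.1 hu).2.2) (fun i j => ?_) _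
    obtain ⟨π, hπ, rfl⟩ := htrans i j
    refine ⟨π, rfl, fun u hu => ?_⟩
    simp only [S, mem_filter, mem_univ, true_and, wt_permVec] at hu ⊢
    exact ⟨hu.1.permVec_of_isAut hπ, hu.2⟩
  have hnopar : #(S.filter fun u => u (Fin.last n) = 0) =
      Lw (C : Set (Fin n → ZMod 2)) w + Nw C w := by
    rw [card_filter_isZeroNeighbor_extCode_last_eq_zero, Lw_evenSub C hw]
  have hsplit : Lw (C : Set (Fin n → ZMod 2)) w + Nw C w +
      #(S.filter fun u => u (Fin.last n) ≠ 0) = #S :=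
    hnopar ▸ card_filter_add_card_filter_not _
  have key : (Lw (C : Set (Fin n → ZMod 2)) w : ℚ) + Nw C w =
      (((n : ℚ) + 1 - w) / (n + 1)) * Lw (extCode C) w := by
    rw [Lw_eq_card (extCode C), div_mul_eq_mul_div, eq_div_iff (by positivity)]
    qify at hpar hsplit
    linear_combination (↑n + 1) * hsplit - hpar
  exact ⟨eq_sub_of_add_eq key, key ▸ le_add_of_nonneg_right (Nat.cast_nonneg _)⟩
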